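/- Let (K,D,⋆) be a complete probabilistic metric space with ⋆ continuous and sup-continuous. If (K,D,⋆) is compact, then the space Lip¹_⋆(K,Δ⁺) of probabilistic 1-Lipschitz maps is a compact subset of (C_⋆(K,Δ⁺), d_∞), where d_∞(f,g) = sup_{x∈K} d_L(f(x),g(x)): every sequence of probabilistic 1-Lipschitz maps has a subsequence converging uniformly (in d_∞) to a probabilistic 1-Lipschitz map. -/

import Mathlib

open Filter Topology

noncomputable section

/-- `Δ⁺`: distribution functions `F : [-∞,∞] → [0,1]`, nondecreasing, left-continuous
on `ℝ`, with `F(-∞)=0`, `F(+∞)=1` and `F(0)=0`. -/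
def IsDistFun (F : EReal → ℝ) : Prop :=
  Monotone F ∧ (∀ t, F t ∈ Set.Icc (0:ℝ) 1) ∧
  (∀ x : ℝ, ContinuousWithinAt F (Set.Iio (x : EReal)) (x : EReal)) ∧
  F ⊥ = 0 ∧ F ⊤ = 1 ∧ F (0 : EReal) = 0

/-- The step function `H_a`. -/
def Hstep (a : ℝ) : EReal → ℝ := fun t => if t ≤ (a : EReal) then 0 else 1

/-- `H₀`. -/
def H0 : EReal → ℝ := Hstep 0

/-- `H_∞`. -/
def Hinf : EReal → ℝ := fun t => if t = ⊤ then 1 else 0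

/-- The condition `A(F,G;h)` : for all `t ∈ (0,1/h)`, `G(t) ≤ F(t+h)+h`. -/
def levyCond (F G : EReal → ℝ) (h : ℝ) : Prop :=
  ∀ t : ℝ, 0 < t → t < 1 / h → G (t : EReal) ≤ F ((t + h : ℝ) : EReal) + h

def levySet (F G : EReal → ℝ) : Set ℝ :=
  {h : ℝ | 0 < h ∧ h ≤ 1 ∧ levyCond F G h ∧ levyCond G F h}

/-- The modified Lévy distance. -/
def dL (F G : EReal → ℝ) : ℝ := sInf (levySet F G)

/-- Weak convergence: pointwise convergence at each (real) continuity point of the limit. -/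
def WeakConv (F : ℕ → EReal → ℝ) (G : EReal → ℝ) : Prop :=
  ∀ t : ℝ, ContinuousAt G (t : EReal) →
    Tendsto (fun n => F n (t : EReal)) atTop (𝓝 (G (t : EReal)))

abbrev TriOp := (EReal → ℝ) → (EReal → ℝ) → (EReal → ℝ)

/-- A triangle function on `Δ⁺`. -/
def IsTriangleFn (star : TriOp) : Prop :=
  (∀ F L, IsDistFun F → IsDistFun L → IsDistFun (star F L)) ∧
  (∀ F L, IsDistFun F → IsDistFun L → star F L = star L F) ∧
  (∀ F L K, IsDistFun F → IsDistFun L → IsDistFun K →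
    star F (star L K) = star (star F L) K) ∧
  (∀ F, IsDistFun F → star F H0 = F) ∧
  (∀ F L K, IsDistFun F → IsDistFun L → IsDistFun K → F ≤ L → star F K ≤ star L K)

/-- `⋆` is continuous with respect to weak convergence. -/
def StarContinuous (star : TriOp) : Prop :=
  ∀ (Fn Ln : ℕ → EReal → ℝ) (F L : EReal → ℝ),
    (∀ n, IsDistFun (Fn n)) → (∀ n, IsDistFun (Ln n)) →
    IsDistFun F → IsDistFun L →
    WeakConv Fn F → WeakConv Ln L →
    WeakConv (fun n => star (Fn n) (Ln n)) (star F L)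

/-- `⋆` is sup-continuous. -/
def StarSupContinuous (star : TriOp) : Prop :=
  ∀ (I : Type) (_ : Nonempty I) (F : I → EReal → ℝ) (L : EReal → ℝ),
    (∀ i, IsDistFun (F i)) → IsDistFun L →
    (fun t => ⨆ i, star (F i) L t) = star (fun t => ⨆ i, F i t) L

/-- A probabilistic metric space `(G, D, ⋆)`. -/
structure PMSpace (G : Type) where
  star : TriOp
  D : G → G → EReal → ℝ
  star_tri : IsTriangleFn star
  D_mem : ∀ p q, IsDistFun (D p q)
  D_eq_iff : ∀ p q, D p q = H0 ↔ p = q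
  D_symm : ∀ p q, D p q = D q p
  D_tri : ∀ p q r, star (D p q) (D q r) ≤ D p r

/-- Probabilistic 1-Lipschitz map. -/
def PLip {G : Type} (M : PMSpace G) (f : G → EReal → ℝ) : Prop :=
  (∀ x, IsDistFun (f x)) ∧ ∀ x y, M.star (M.D x y) (f y) ≤ f x

/-- Probabilistically continuous map. -/
def PCont {G : Type} (M : PMSpace G) (f : G → EReal → ℝ) : Prop :=
  (∀ x, IsDistFun (f x)) ∧
  ∀ (z : G) (zn : ℕ → G),
    WeakConv (fun n => M.D (zn n) z) H0 →
    WeakConv (fun n => f (zn n)) (f z)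

/-- The uniform modified Lévy distance `d_∞`. -/
def dInf {G : Type} (f g : G → EReal → ℝ) : ℝ := ⨆ x, dL (f x) (g x)

/-- Probabilistic Cauchy sequence: `D(z_n,z_p)(t) → H₀(t)` for all real `t`. -/
def PCauchy {G : Type} (M : PMSpace G) (z : ℕ → G) : Prop :=
  ∀ t : ℝ, Tendsto (fun np : ℕ × ℕ => M.D (z np.1) (z np.2) (t : EReal))
    atTop (𝓝 (H0 (t : EReal)))

def PConvTo {G : Type} (M : PMSpace G) (z : ℕ → G) (w : G) : Prop :=
  ∀ t : ℝ, Tendsto (fun n => M.D (z n) w (t : EReal)) atTop (𝓝 (H0 (t : EReal)))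

def PComplete {G : Type} (M : PMSpace G) : Prop :=
  ∀ z : ℕ → G, PCauchy M z → ∃ w, PConvTo M z w

/-- Compactness: complete and every strong `t`-neighborhood cover has a finite subcover. -/
def PCompact {G : Type} (M : PMSpace G) : Prop :=
  PComplete M ∧ ∀ t : ℝ, 0 < t → ∃ A : Finset G, ∀ x : G, ∃ a ∈ A, M.D a x (t : EReal) > 1 - t

/-!
Equicontinuity: by continuity of `⋆` at `H₀` there is, for every `ε`, a `δ` such that
`D(x,y)(t) > 1 - t` for some `t < δ` forces `d_L(D(x,y) ⋆ G, G) ≤ ε` for every `G ∈ Δ⁺`; since a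
1-Lipschitz `f` satisfies `D(x,y) ⋆ f(y) ≤ f(x)` and `D(x,y) ⋆ f(x) ≤ f(y)`, this gives
`d_L(f(x), f(y)) ≤ ε` uniformly in `f`. Helly's selection theorem along the countable union of
finite `1/(m+1)`-nets yields a subsequence converging weakly, hence in `d_L`, at every net point,
and equicontinuity turns this into uniform Cauchyness. Pointwise Helly limits are then uniform
limits, and the Lipschitz inequality passes to the limit by continuity of `⋆`, comparing the two
sides at their common continuity points.
-/

namespace IsDistFun

variable {F : EReal → ℝ}

lemma nonneg (hF : IsDistFun F) (t : EReal) : 0 ≤ F t := (hF.2.1 t).1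

lemma le_one (hF : IsDistFun F) (t : EReal) : F t ≤ 1 := (hF.2.1 t).2

lemma eq_zero_of_nonpos (hF : IsDistFun F) {t : EReal} (ht : t ≤ 0) : F t = 0 :=
  le_antisymm (hF.2.2.2.2.2 ▸ hF.1 ht) (hF.nonneg t)

end IsDistFun

lemma H0_coe_of_nonpos {t : ℝ} (ht : t ≤ 0) : H0 t = 0 :=
  if_pos (EReal.coe_le_coe_iff.2 ht)

lemma H0_coe_of_pos {t : ℝ} (ht : 0 < t) : H0 t = 1 :=
  if_neg (not_le.2 (EReal.coe_lt_coe_iff.2 ht))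

lemma isDistFun_H0 : IsDistFun H0 := by
  have hmono : Monotone H0 := fun a b hab => by
    by_cases hb : b ≤ ((0 : ℝ) : EReal)
    · simp only [H0, Hstep, if_pos hb, if_pos (hab.trans hb), le_refl]
    · simp only [H0, Hstep, if_neg hb]
      split_ifs <;> norm_num
  refine ⟨hmono, fun t => ?_, fun x => ?_, by simp [H0, Hstep], by simp [H0, Hstep],
    by simp [H0, Hstep]⟩
  · unfold H0 Hstep
    split_ifs <;> simp
  · suffices ∀ᶠ y in 𝓝[<] (x : EReal), H0 y = H0 x from
      tendsto_const_nhds.congr' (this.mono fun y hy => hy.symm)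
    rcases le_or_gt x 0 with hx | hx
    · filter_upwards [self_mem_nhdsWithin] with y hy
      rw [H0_coe_of_nonpos hx]
      exact if_pos ((le_of_lt hy).trans (EReal.coe_le_coe_iff.2 hx))
    · filter_upwards [Ioo_mem_nhdsLT (EReal.coe_lt_coe_iff.2 hx)] with y hy
      rw [H0_coe_of_pos hx]
      exact if_neg (not_le.2 hy.1)

section Levy

variable {F G H : EReal → ℝ} {a b h h' ε : ℝ}

lemma levyCond_one (hF : IsDistFun F) (hG : IsDistFun G) : levyCond F G 1 := fun t _ _ => by
  linarith [hG.le_one t, hF.nonneg ((t + 1 : ℝ) : EReal)]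

lemma levyCond.mono (hc : levyCond F G h) (hF : Monotone F) (h0 : 0 < h) (hh : h ≤ h') :
    levyCond F G h' := fun t ht ht' =>
  calc G t ≤ F ↑(t + h) + h := hc t ht (ht'.trans_le (one_div_le_one_div_of_le h0 hh))
    _ ≤ F ↑(t + h') + h' := add_le_add (hF (EReal.coe_le_coe_iff.2 (by linarith))) hh

lemma levyCond.trans (hFG : levyCond F G a) (hGH : levyCond G H b) (ha : 0 < a) (hb : 0 < b)
    (hab : a + b ≤ 1) : levyCond F H (a + b) := by
  intro t ht htab
  have htb : t < 1 / b := htab.trans_le (one_div_le_one_div_of_le hb (by linarith))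
  have hgap : 1 / (a + b) + b ≤ 1 / a := by
    rw [div_add' _ _ _ (by positivity), div_le_div_iff₀ (by positivity) ha]
    nlinarith [mul_le_one₀ (by linarith : a ≤ 1) (by positivity) hab]
  calc H t ≤ G ↑(t + b) + b := hGH t ht htb
    _ ≤ F ↑(t + b + a) + a + b := by linarith [hFG (t + b) (by linarith) (by linarith)]
    _ = F ↑(t + (a + b)) + (a + b) := by ring_nf

lemma one_mem_levySet (hF : IsDistFun F) (hG : IsDistFun G) : (1 : ℝ) ∈ levySet F G :=
  ⟨one_pos, le_rfl, levyCond_one hF hG, levyCond_one hG hF⟩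

lemma dL_nonneg : 0 ≤ dL F G := Real.sInf_nonneg fun _ h => h.1.le

lemma dL_le_of_mem (hm : h ∈ levySet F G) : dL F G ≤ h :=
  csInf_le ⟨0, fun _ h => h.1.le⟩ hm

lemma dL_le_one (hF : IsDistFun F) (hG : IsDistFun G) : dL F G ≤ 1 :=
  dL_le_of_mem (one_mem_levySet hF hG)

lemma mem_levySet_of_dL_lt (hF : IsDistFun F) (hG : IsDistFun G) (hlt : dL F G < h)
    (hle : h ≤ 1) : h ∈ levySet F G := by
  obtain ⟨h₀, hm, hh₀⟩ := exists_lt_of_csInf_lt ⟨1, one_mem_levySet hF hG⟩ hlt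
  exact ⟨dL_nonneg.trans_lt hlt, hle, hm.2.2.1.mono hF.1 hm.1 hh₀.le,
    hm.2.2.2.mono hG.1 hm.1 hh₀.le⟩

lemma dL_comm (F G : EReal → ℝ) : dL F G = dL G F := by
  unfold dL levySet
  simp only [and_comm (a := levyCond F G _)]

lemma dL_le_of_forall_lt (hF : IsDistFun F) (hG : IsDistFun G)
    (h : ∀ ε', ε < ε' → ε' ≤ 1 → ε' ∈ levySet F G) : dL F G ≤ ε := by
  rcases le_or_gt 1 ε with h1 | h1
  · exact (dL_le_one hF hG).trans h1
  refine le_of_forall_gt fun c hc => ?_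
  obtain ⟨ε', hε'c, hε'⟩ : ∃ ε', ε' < c ∧ ε < ε' ∧ ε' ≤ 1 :=
    ⟨min ((ε + c) / 2) 1, (min_le_left _ _).trans_lt (by linarith),
      lt_min (by linarith) h1, min_le_right _ _⟩
  exact (dL_le_of_mem (h ε' hε'.1 hε'.2)).trans_lt hε'c

lemma dL_triangle (hF : IsDistFun F) (hG : IsDistFun G) (hH : IsDistFun H) :
    dL F G ≤ dL F H + dL H G := by
  refine dL_le_of_forall_lt hF hG fun ε' hlt hle => ?_
  have hFH₀ : 0 ≤ dL F H := dL_nonneg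
  have hHG₀ : 0 ≤ dL H G := dL_nonneg
  set δ := (ε' - dL F H - dL H G) / 2 with hδ
  have hδ0 : 0 < δ := by linarith
  have hFH : dL F H + δ ∈ levySet F H := mem_levySet_of_dL_lt hF hH (by linarith) (by linarith)
  have hHG : dL H G + δ ∈ levySet H G := mem_levySet_of_dL_lt hH hG (by linarith) (by linarith)
  have hsum : dL F H + δ + (dL H G + δ) = ε' := by ring
  refine ⟨by linarith, hle, ?_, ?_⟩
  · exact hsum ▸ hFH.2.2.1.trans hHG.2.2.1 hFH.1 hHG.1 (hsum ▸ hle)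
  · rw [← hsum, add_comm]
    exact hHG.2.2.2.trans hFH.2.2.2 hHG.1 hFH.1 (by linarith)

lemma dL_le_of_le_of_le {F' G' : EReal → ℝ} (hF : IsDistFun F) (hG : IsDistFun G)
    (hF' : IsDistFun F') (hG' : IsDistFun G') (hGF : G' ≤ F) (hFG : F' ≤ G)
    (hG'G : dL G' G ≤ ε) (hF'F : dL F' F ≤ ε) : dL F G ≤ ε := by
  refine dL_le_of_forall_lt hF hG fun ε' hlt hle => ?_
  have hG'Gε' := mem_levySet_of_dL_lt hG' hG (hG'G.trans_lt hlt) hle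
  have hF'Fε' := mem_levySet_of_dL_lt hF' hF (hF'F.trans_lt hlt) hle
  refine ⟨hG'Gε'.1, hle, fun t ht htε => ?_, fun t ht htε => ?_⟩
  · linarith [hGF ((t + ε' : ℝ) : EReal), hG'Gε'.2.2.1 t ht htε]
  · linarith [hFG ((t + ε' : ℝ) : EReal), hF'Fε'.2.2.1 t ht htε]

end Levy

section Helly

/-- The weak limit in Helly's selection theorem, built from the limits `u q` at the rationals. -/
def ratSupBelow (u : ℚ → ℝ) : EReal → ℝ := fun t =>
  if t = ⊤ then 1 else sSup (insert 0 (u '' {q | ((q : ℝ) : EReal) < t}))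

variable {u : ℚ → ℝ}

lemma bddAbove_ratSupBelow_set (hu1 : ∀ q, u q ≤ 1) (t : EReal) :
    BddAbove (insert 0 (u '' {q | ((q : ℝ) : EReal) < t})) :=
  ⟨1, by rintro _ (rfl | ⟨q, -, rfl⟩); exacts [zero_le_one, hu1 q]⟩

lemma le_ratSupBelow (hu1 : ∀ q, u q ≤ 1) {q : ℚ} {t : EReal} (hq : ((q : ℝ) : EReal) < t) :
    u q ≤ ratSupBelow u t := by
  unfold ratSupBelow
  split_ifs
  · exact hu1 q
  · exact le_csSup (bddAbove_ratSupBelow_set hu1 t) (Set.mem_insert_of_mem _ ⟨q, hq, rfl⟩)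

lemma ratSupBelow_nonneg (hu1 : ∀ q, u q ≤ 1) (t : EReal) : 0 ≤ ratSupBelow u t := by
  unfold ratSupBelow
  split_ifs
  · exact zero_le_one
  · exact le_csSup (bddAbove_ratSupBelow_set hu1 t) (Set.mem_insert _ _)

lemma ratSupBelow_le_one (hu1 : ∀ q, u q ≤ 1) (t : EReal) : ratSupBelow u t ≤ 1 := by
  unfold ratSupBelow
  split_ifs
  · exact le_rfl
  · exact csSup_le (Set.insert_nonempty _ _)
      (by rintro _ (rfl | ⟨q, -, rfl⟩); exacts [zero_le_one, hu1 q])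

lemma ratSupBelow_eq_zero (hu1 : ∀ q, u q ≤ 1) (huz : ∀ q : ℚ, (q : ℝ) ≤ 0 → u q = 0)
    {t : EReal} (ht : t ≤ 0) : ratSupBelow u t = 0 := by
  refine le_antisymm ?_ (ratSupBelow_nonneg hu1 t)
  rw [ratSupBelow, if_neg (ht.trans_lt EReal.zero_lt_top).ne]
  refine csSup_le (Set.insert_nonempty _ _) ?_
  rintro _ (rfl | ⟨q, hq, rfl⟩)
  · exact le_rfl
  · exact (huz q (EReal.coe_nonpos.1 (hq.trans_le ht).le)).le

lemma exists_lt_of_lt_ratSupBelow {t : EReal} (ht : t ≠ ⊤) {a : ℝ} (ha : a < ratSupBelow u t) :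
    a < 0 ∨ ∃ q : ℚ, ((q : ℝ) : EReal) < t ∧ a < u q := by
  rw [ratSupBelow, if_neg ht] at ha
  obtain ⟨_, (rfl | ⟨q, hq, rfl⟩), hlt⟩ := exists_lt_of_lt_csSup (Set.insert_nonempty _ _) ha
  exacts [Or.inl hlt, Or.inr ⟨q, hq, hlt⟩]

lemma ratSupBelow_mono (hu1 : ∀ q, u q ≤ 1) : Monotone (ratSupBelow u) := by
  intro s t hst
  refine le_of_forall_lt fun a ha => ?_
  rcases eq_or_ne s ⊤ with rfl | hs
  · rwa [top_le_iff.1 hst]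
  rcases exists_lt_of_lt_ratSupBelow hs ha with ha0 | ⟨q, hq, hqa⟩
  · exact ha0.trans_le (ratSupBelow_nonneg hu1 t)
  · exact hqa.trans_le (le_ratSupBelow hu1 (hq.trans_le hst))

lemma isDistFun_ratSupBelow (hu1 : ∀ q, u q ≤ 1) (huz : ∀ q : ℚ, (q : ℝ) ≤ 0 → u q = 0) :
    IsDistFun (ratSupBelow u) := by
  have hmono := ratSupBelow_mono hu1
  refine ⟨hmono, fun t => ⟨ratSupBelow_nonneg hu1 t, ratSupBelow_le_one hu1 t⟩, fun x => ?_,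
    ratSupBelow_eq_zero hu1 huz bot_le, if_pos rfl, ratSupBelow_eq_zero hu1 huz le_rfl⟩
  refine tendsto_order.2 ⟨fun a ha => ?_, fun a ha => ?_⟩
  · rcases exists_lt_of_lt_ratSupBelow (EReal.coe_ne_top x) ha with ha0 | ⟨q, hq, hqa⟩
    · exact Eventually.of_forall fun y => ha0.trans_le (ratSupBelow_nonneg hu1 y)
    · filter_upwards [Ioo_mem_nhdsLT hq] with y hy
      exact hqa.trans_le (le_ratSupBelow hu1 hy.1)
  · filter_upwards [self_mem_nhdsWithin] with y hy
    exact (hmono (le_of_lt hy)).trans_lt ha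

lemma weakConv_ratSupBelow {Fs : ℕ → EReal → ℝ} (hFs : ∀ n, IsDistFun (Fs n))
    (hu1 : ∀ q, u q ≤ 1)
    (hconv : ∀ q : ℚ, Tendsto (fun n => Fs n ((q : ℝ) : EReal)) atTop (𝓝 (u q))) :
    WeakConv Fs (ratSupBelow u) := by
  intro t hcont
  refine tendsto_order.2 ⟨fun a ha => ?_, fun a ha => ?_⟩
  · rcases exists_lt_of_lt_ratSupBelow (EReal.coe_ne_top t) ha with ha0 | ⟨q, hq, hqa⟩
    · exact Eventually.of_forall fun n => ha0.trans_le ((hFs n).nonneg _)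
    · filter_upwards [(hconv q).eventually (lt_mem_nhds hqa)] with n hn
      exact hn.trans_le ((hFs n).1 hq.le)
  · have hright : ∀ᶠ s : ℝ in 𝓝[>] t, ratSupBelow u s < a :=
      ((hcont.comp continuous_coe_real_ereal.continuousAt).eventually
        (gt_mem_nhds ha)).filter_mono nhdsWithin_le_nhds
    obtain ⟨s, hsa, hts⟩ := (hright.and self_mem_nhdsWithin).exists
    obtain ⟨q, htq, hqs⟩ := exists_rat_btwn hts
    have hqa : u q < a := (le_ratSupBelow hu1 (EReal.coe_lt_coe_iff.2 hqs)).trans_lt hsa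
    filter_upwards [(hconv q).eventually (gt_mem_nhds hqa)] with n hn
    exact ((hFs n).1 (EReal.coe_le_coe_iff.2 htq.le)).trans_lt hn

theorem helly_selection_family {ι : Type} [Countable ι] (Fs : ℕ → ι → EReal → ℝ)
    (hFs : ∀ n i, IsDistFun (Fs n i)) :
    ∃ (φ : ℕ → ℕ) (G : ι → EReal → ℝ), StrictMono φ ∧ (∀ i, IsDistFun (G i)) ∧
      ∀ i, WeakConv (fun n => Fs (φ n) i) (G i) := by
  let Φ : ℕ → ι × ℚ → Set.Icc (0 : ℝ) 1 := fun n p =>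
    ⟨Fs n p.1 ((p.2 : ℝ) : EReal), (hFs n p.1).2.1 _⟩
  obtain ⟨a, -, φ, hφ, hlim⟩ := isCompact_univ.tendsto_subseq (x := Φ) fun n => Set.mem_univ _
  have hconv : ∀ i (q : ℚ), Tendsto (fun n => Fs (φ n) i ((q : ℝ) : EReal)) atTop (𝓝 (a (i, q))) :=
    fun i q => (continuous_subtype_val.tendsto _).comp (tendsto_pi_nhds.1 hlim (i, q))
  have hu1 : ∀ i q, (a (i, q) : ℝ) ≤ 1 := fun i q => (a (i, q)).2.2
  have huz : ∀ i (q : ℚ), (q : ℝ) ≤ 0 → (a (i, q) : ℝ) = 0 := fun i q hq =>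
    tendsto_nhds_unique (hconv i q) (by simp [(hFs _ i).eq_zero_of_nonpos (EReal.coe_nonpos.2 hq)])
  exact ⟨φ, fun i => ratSupBelow fun q => a (i, q), hφ,
    fun i => isDistFun_ratSupBelow (hu1 i) (huz i),
    fun i => weakConv_ratSupBelow (fun n => hFs (φ n) i) (hu1 i) (hconv i)⟩

theorem helly_selection (Fs : ℕ → EReal → ℝ) (hFs : ∀ n, IsDistFun (Fs n)) :
    ∃ (φ : ℕ → ℕ) (G : EReal → ℝ), StrictMono φ ∧ IsDistFun G ∧
      WeakConv (fun n => Fs (φ n)) G := by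
  obtain ⟨φ, G, hφ, hG, hw⟩ := helly_selection_family (fun n (_ : Unit) => Fs n) fun n _ => hFs n
  exact ⟨φ, G (), hφ, hG (), hw ()⟩

end Helly

section WeakConvergence

variable {F G : EReal → ℝ} {Fs : ℕ → EReal → ℝ}

lemma exists_continuousAt_btwn (hF : Monotone F) (hG : Monotone G) {a b : ℝ} (hab : a < b) :
    ∃ c : ℝ, a < c ∧ c < b ∧ ContinuousAt F c ∧ ContinuousAt G c := by
  have hcount : {c : ℝ | ¬ContinuousAt F c ∨ ¬ContinuousAt G c}.Countable :=
    (hF.countable_not_continuousAt.union hG.countable_not_continuousAt).preimage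
      EReal.coe_injective
  obtain ⟨c, hc, hac, hcb⟩ := (hcount.dense_compl ℝ).exists_between hab
  exact ⟨c, hac, hcb, by simpa [not_or] using hc⟩

lemma exists_finset_continuousAt_near (hG : Monotone G) {ε : ℝ} (hε : 0 < ε) (L : ℝ) :
    ∃ S : Finset ℝ, (∀ c ∈ S, ContinuousAt G c) ∧
      ∀ t : ℝ, 0 < t → t < L → ∃ c ∈ S, t ≤ c ∧ c ≤ t + ε := by
  -- a continuity point in each cell `(j ε/2, (j+1) ε/2)` of a grid covering `(0, L)`
  choose c hc₁ hc₂ hcont _ using fun j : ℕ =>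
    exists_continuousAt_btwn hG hG (show j * (ε / 2) < (j + 1) * (ε / 2) by linarith)
  refine ⟨(Finset.range (⌈L / (ε / 2)⌉₊ + 1)).image c, by simpa using fun j _ => hcont j,
    fun t ht htL => ?_⟩
  obtain ⟨j, hj₁, hj₂⟩ : ∃ j : ℕ, t ≤ j * (ε / 2) ∧ ((j : ℝ) - 1) * (ε / 2) < t := by
    refine ⟨⌈t / (ε / 2)⌉₊, (div_le_iff₀ (by positivity)).1 (Nat.le_ceil _), ?_⟩
    have := Nat.ceil_lt_add_one (div_nonneg ht.le (by positivity) : 0 ≤ t / (ε / 2))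
    exact (lt_div_iff₀ (by positivity)).1 (by linarith)
  have hjL : j < ⌈L / (ε / 2)⌉₊ + 1 := by
    have : (j : ℝ) - 1 < L / (ε / 2) := (lt_div_iff₀ (by positivity)).2 (by linarith)
    exact_mod_cast (by linarith [Nat.le_ceil (L / (ε / 2))] : (j : ℝ) < ⌈L / (ε / 2)⌉₊ + 1)
  refine ⟨c j, Finset.mem_image_of_mem c (Finset.mem_range.2 hjL),
    hj₁.trans (hc₁ j).le, ?_⟩
  nlinarith [hc₂ j]

lemma eventually_dL_le_of_weakConv (hFs : ∀ n, IsDistFun (Fs n)) (hG : IsDistFun G)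
    (hw : WeakConv Fs G) {ε : ℝ} (hε : 0 < ε) (hε1 : ε ≤ 1) :
    ∀ᶠ n in atTop, dL (Fs n) G ≤ ε := by
  obtain ⟨S, hSc, hSnear⟩ := exists_finset_continuousAt_near hG.1 hε (1 / ε)
  have hclose : ∀ᶠ n in atTop, ∀ c ∈ S, |Fs n c - G c| < ε := by
    refine (eventually_all_finset S).2 fun c hc => ?_
    simpa [Real.dist_eq] using Metric.tendsto_nhds.1 (hw c (hSc c hc)) ε hε
  filter_upwards [hclose] with n hn
  refine dL_le_of_mem ⟨hε, hε1, fun t ht htε => ?_, fun t ht htε => ?_⟩ <;>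
  obtain ⟨c, hcS, htc, hct⟩ := hSnear t ht htε <;>
  have hc := abs_sub_lt_iff.1 (hn c hcS)
  · linarith [hG.1 (EReal.coe_le_coe_iff.2 htc), (hFs n).1 (EReal.coe_le_coe_iff.2 hct)]
  · linarith [(hFs n).1 (EReal.coe_le_coe_iff.2 htc), hG.1 (EReal.coe_le_coe_iff.2 hct)]

lemma tendsto_zero_of_forall_eventually_le {α : Type*} {l : Filter α} {u : α → ℝ}
    (h0 : ∀ n, 0 ≤ u n) (h : ∀ ε > 0, ∀ᶠ n in l, u n ≤ ε) : Tendsto u l (𝓝 0) :=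
  tendsto_order.2 ⟨fun _ ha => Eventually.of_forall fun n => ha.trans_le (h0 n),
    fun _ ha => (h _ (half_pos ha)).mono fun _ hn => hn.trans_lt (half_lt_self ha)⟩

lemma tendsto_dL_of_weakConv (hFs : ∀ n, IsDistFun (Fs n)) (hG : IsDistFun G)
    (hw : WeakConv Fs G) : Tendsto (fun n => dL (Fs n) G) atTop (𝓝 0) :=
  tendsto_zero_of_forall_eventually_le (fun _ => dL_nonneg) fun _ hε =>
    (eventually_dL_le_of_weakConv hFs hG hw (lt_min hε one_pos) (min_le_right _ _)).mono
      fun _ hn => hn.trans (min_le_left _ _)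

lemma weakConv_of_tendsto_dL (hFs : ∀ n, IsDistFun (Fs n)) (hG : IsDistFun G)
    (hd : Tendsto (fun n => dL (Fs n) G) atTop (𝓝 0)) : WeakConv Fs G := by
  intro t hcont
  rcases le_or_gt t 0 with ht | ht
  · simp [(hFs _).eq_zero_of_nonpos (EReal.coe_nonpos.2 ht),
      hG.eq_zero_of_nonpos (EReal.coe_nonpos.2 ht)]
  have hsandwich : ∀ᶠ h in 𝓝[>] (0 : ℝ), ∀ᶠ n in atTop,
      G ↑(t - h) - h ≤ Fs n t ∧ Fs n t ≤ G ↑(t + h) + h := by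
    filter_upwards [self_mem_nhdsWithin,
      (eventually_lt_nhds one_pos).filter_mono nhdsWithin_le_nhds,
      (eventually_lt_nhds ht).filter_mono nhdsWithin_le_nhds,
      tendsto_inv_nhdsGT_zero.eventually_gt_atTop t] with h (hh : 0 < h) hh1 hht htinv
    filter_upwards [hd.eventually (gt_mem_nhds hh)] with n hn
    have hmem := mem_levySet_of_dL_lt (hFs n) hG hn hh1.le
    have hleft := hmem.2.2.1 (t - h) (by linarith) (by rw [one_div]; linarith)
    rw [sub_add_cancel] at hleft
    exact ⟨by linarith, hmem.2.2.2 t ht (by rwa [one_div])⟩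
  have hGt : ContinuousAt (fun s : ℝ => G s) t := hcont.comp continuous_coe_real_ereal.continuousAt
  have hlow : Tendsto (fun h : ℝ => G ↑(t - h) - h) (𝓝 0) (𝓝 (G t)) := by
    simpa using (hGt.tendsto.comp ((continuous_const.sub continuous_id).tendsto' 0 t
      (by simp))).sub tendsto_id
  have hup : Tendsto (fun h : ℝ => G ↑(t + h) + h) (𝓝 0) (𝓝 (G t)) := by
    simpa using (hGt.tendsto.comp ((continuous_const.add continuous_id).tendsto' 0 t
      (by simp))).add tendsto_id
  refine tendsto_order.2 ⟨fun a ha => ?_, fun a ha => ?_⟩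
  · obtain ⟨h, hah, hn⟩ := (((hlow.eventually (lt_mem_nhds ha)).filter_mono
      nhdsWithin_le_nhds).and hsandwich).exists
    exact hn.mono fun n hn => hah.trans_le hn.1
  · obtain ⟨h, hah, hn⟩ := (((hup.eventually (gt_mem_nhds ha)).filter_mono
      nhdsWithin_le_nhds).and hsandwich).exists
    exact hn.mono fun n hn => hn.2.trans_lt hah

end WeakConvergence

section Star

variable {star : TriOp}

lemma IsTriangleFn.H0_star (htri : IsTriangleFn star) {G : EReal → ℝ} (hG : IsDistFun G) :
    star H0 G = G := by
  rw [htri.2.1 H0 G isDistFun_H0 hG, htri.2.2.2.1 G hG]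

lemma weakConv_H0 {Dn : ℕ → EReal → ℝ} {tn : ℕ → ℝ} (hD : ∀ n, IsDistFun (Dn n))
    (ht : Tendsto tn atTop (𝓝 0)) (hDt : ∀ n, 1 - tn n < Dn n (tn n)) : WeakConv Dn H0 := by
  intro s _
  rcases le_or_gt s 0 with hs | hs
  · simp [H0_coe_of_nonpos hs, (hD _).eq_zero_of_nonpos (EReal.coe_nonpos.2 hs)]
  rw [H0_coe_of_pos hs]
  refine tendsto_of_tendsto_of_tendsto_of_le_of_le' (by simpa using ht.const_sub 1)
    tendsto_const_nhds ?_ (Eventually.of_forall fun n => (hD n).le_one _)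
  filter_upwards [ht.eventually (gt_mem_nhds hs)] with n hn
  exact (hDt n).le.trans ((hD n).1 (EReal.coe_le_coe_iff.2 hn.le))

lemma exists_dL_star_le (htri : IsTriangleFn star) (hc : StarContinuous star) {ε : ℝ}
    (hε : 0 < ε) :
    ∃ δ > 0, ∀ (Dd G : EReal → ℝ) (t : ℝ), IsDistFun Dd → IsDistFun G → t < δ →
      1 - t < Dd t → dL (star Dd G) G ≤ ε := by
  by_contra! hcon
  choose Dn Gn tn hD hG htn hDt hdL using fun k : ℕ => hcon (1 / (k + 1)) (by positivity)
  obtain ⟨ψ, G, hψ, hGdf, hwG⟩ := helly_selection Gn hG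
  have ht : Tendsto (fun j => tn (ψ j)) atTop (𝓝 0) :=
    tendsto_of_tendsto_of_tendsto_of_le_of_le tendsto_const_nhds
      (tendsto_one_div_add_atTop_nhds_zero_nat.comp hψ.tendsto_atTop)
      (fun j => by linarith [hDt (ψ j), (hD (ψ j)).le_one (tn (ψ j))]) fun j => (htn (ψ j)).le
  have hstar := hc _ _ _ _ (fun j => hD _) (fun j => hG _) isDistFun_H0 hGdf
    (weakConv_H0 (fun j => hD _) ht fun j => hDt _) hwG
  rw [htri.H0_star hGdf] at hstar
  have hS : ∀ j, IsDistFun (star (Dn (ψ j)) (Gn (ψ j))) := fun j => htri.1 _ _ (hD _) (hG _)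
  have hlim : Tendsto (fun j => dL (star (Dn (ψ j)) (Gn (ψ j))) (Gn (ψ j))) atTop (𝓝 0) := by
    have hsum := (tendsto_dL_of_weakConv hS hGdf hstar).add
      (tendsto_dL_of_weakConv (fun j => hG _) hGdf hwG)
    rw [add_zero] at hsum
    refine squeeze_zero (fun _ => dL_nonneg) (fun j => ?_) hsum
    rw [dL_comm (Gn (ψ j)) G]
    exact dL_triangle (hS j) (hG _) hGdf
  obtain ⟨j, hj⟩ := (hlim.eventually (gt_mem_nhds hε)).exists
  exact (hdL (ψ j)).not_gt hj

end Star

section Lipschitz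

variable {K : Type} {M : PMSpace K}

lemma exists_dL_le_of_PLip (hc : StarContinuous M.star) {ε : ℝ} (hε : 0 < ε) :
    ∃ δ > 0, ∀ f, PLip M f → ∀ (x y : K) (t : ℝ), t < δ → 1 - t < M.D x y t →
      dL (f x) (f y) ≤ ε := by
  obtain ⟨δ, hδ, hstar⟩ := exists_dL_star_le M.star_tri hc hε
  refine ⟨δ, hδ, fun f hf x y t htδ hDt => ?_⟩
  have hD := M.D_mem x y
  exact dL_le_of_le_of_le (hf.1 x) (hf.1 y) (M.star_tri.1 _ _ hD (hf.1 x))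
    (M.star_tri.1 _ _ hD (hf.1 y)) (hf.2 x y) (M.D_symm x y ▸ hf.2 y x)
    (hstar _ _ t hD (hf.1 y) htδ hDt) (hstar _ _ t hD (hf.1 x) htδ hDt)

lemma le_of_forall_continuousAt_le {R S : EReal → ℝ} (hR : IsDistFun R) (hS : IsDistFun S)
    (h : ∀ t : ℝ, ContinuousAt R t → ContinuousAt S t → R t ≤ S t) : R ≤ S := by
  intro t
  induction t using EReal.rec with
  | bot => rw [hR.2.2.2.1, hS.2.2.2.1]
  | top => rw [hR.2.2.2.2.1, hS.2.2.2.2.1]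
  | coe x =>
    refine le_of_forall_lt fun a ha => ?_
    have hleft : ∀ᶠ y : ℝ in 𝓝[<] x, a < R y :=
      ((hR.2.2.1 x).comp continuous_coe_real_ereal.continuousWithinAt
        fun y hy => EReal.coe_lt_coe_iff.2 hy).eventually (lt_mem_nhds ha)
    obtain ⟨l, hlx, hl⟩ := mem_nhdsLT_iff_exists_Ioo_subset.1 hleft
    obtain ⟨c, hlc, hcx, hRc, hSc⟩ := exists_continuousAt_btwn hR.1 hS.1 hlx
    exact (hl ⟨hlc, hcx⟩).trans_le ((h c hRc hSc).trans (hS.1 (EReal.coe_le_coe_iff.2 hcx.le)))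

lemma PLip.of_weakConv (hc : StarContinuous M.star) {f : ℕ → K → EReal → ℝ}
    {g : K → EReal → ℝ} (hf : ∀ n, PLip M (f n)) (hg : ∀ x, IsDistFun (g x))
    (hfg : ∀ x, WeakConv (fun n => f n x) (g x)) : PLip M g := by
  refine ⟨hg, fun x y => le_of_forall_continuousAt_le (M.star_tri.1 _ _ (M.D_mem x y) (hg y))
    (hg x) fun t hst hgt => ?_⟩
  have hlim := hc (fun _ => M.D x y) (fun n => f n y) _ _ (fun _ => M.D_mem x y)
    (fun n => (hf n).1 y) (M.D_mem x y) (hg y) (fun _ _ => tendsto_const_nhds) (hfg y)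
  exact le_of_tendsto_of_tendsto' (hlim t hst) (hfg x t hgt) fun n => (hf n).2 x y t

end Lipschitz

section UniformLimit

variable {ι : Type} {f : ℕ → ι → EReal → ℝ} {g : ι → EReal → ℝ}

lemma exists_uniform_limit_of_uniformCauchy (hf : ∀ n x, IsDistFun (f n x))
    (hcauchy : ∀ ε > 0, ∃ N, ∀ m ≥ N, ∀ n ≥ N, ∀ x, dL (f m x) (f n x) ≤ ε) :
    ∃ g : ι → EReal → ℝ, (∀ x, IsDistFun (g x)) ∧
      ∀ ε > 0, ∀ᶠ n in atTop, ∀ x, dL (f n x) (g x) ≤ ε := by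
  choose ψ g hψ hg hfg using fun x => helly_selection (fun n => f n x) fun n => hf n x
  refine ⟨g, hg, fun ε hε => ?_⟩
  obtain ⟨N, hN⟩ := hcauchy (ε / 2) (half_pos hε)
  filter_upwards [eventually_ge_atTop N] with n hn x
  obtain ⟨j, hj, hjN⟩ := (((tendsto_dL_of_weakConv (fun j => hf _ x) (hg x) (hfg x)).eventually
    (eventually_le_nhds (half_pos hε))).and ((hψ x).tendsto_atTop.eventually_ge_atTop N)).exists
  linarith [dL_triangle (hf n x) (hg x) (hf (ψ x j) x), hN n hn (ψ x j) hjN x]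

lemma tendsto_dL_of_uniform (h : ∀ ε > 0, ∀ᶠ n in atTop, ∀ x, dL (f n x) (g x) ≤ ε) (x : ι) :
    Tendsto (fun n => dL (f n x) (g x)) atTop (𝓝 0) :=
  tendsto_zero_of_forall_eventually_le (fun _ => dL_nonneg) fun ε hε =>
    (h ε hε).mono fun _ hn => hn x

lemma tendsto_dInf_of_uniform (h : ∀ ε > 0, ∀ᶠ n in atTop, ∀ x, dL (f n x) (g x) ≤ ε) :
    Tendsto (fun n => dInf (f n) g) atTop (𝓝 0) :=
  tendsto_zero_of_forall_eventually_le (fun _ => Real.iSup_nonneg fun _ => dL_nonneg)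
    fun ε hε => (h ε hε).mono fun _ hn => Real.iSup_le hn hε.le

end UniformLimit

lemma exists_subseq_uniformCauchy_dL {K : Type} {M : PMSpace K} (hc : StarContinuous M.star)
    (hnet : ∀ t : ℝ, 0 < t → ∃ A : Finset K, ∀ x : K, ∃ a ∈ A, M.D a x (t : EReal) > 1 - t)
    {f : ℕ → K → EReal → ℝ} (hf : ∀ n, PLip M (f n)) :
    ∃ φ : ℕ → ℕ, StrictMono φ ∧
      ∀ ε > 0, ∃ N, ∀ m ≥ N, ∀ n ≥ N, ∀ x, dL (f (φ m) x) (f (φ n) x) ≤ ε := by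
  choose A hA using fun m : ℕ => hnet (1 / (m + 1)) (by positivity)
  set T : Set K := ⋃ m, (A m : Set K)
  have : Countable T := (Set.countable_iUnion fun m => (A m).countable_toSet).to_subtype
  obtain ⟨φ, L, hφ, hL, hfL⟩ :=
    helly_selection_family (fun n (a : T) => f n a) fun n a => (hf n).1 a
  refine ⟨φ, hφ, fun ε hε => ?_⟩
  obtain ⟨δ, hδ, hequi⟩ := exists_dL_le_of_PLip hc (by positivity : 0 < ε / 4)
  obtain ⟨m, hm⟩ := exists_nat_one_div_lt hδ
  have hAT : ∀ a ∈ A m, a ∈ T := fun a ha => Set.mem_iUnion.2 ⟨m, ha⟩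
  have hnear : ∀ᶠ n in atTop, ∀ a : A m, dL (f (φ n) a) (L ⟨a, hAT a a.2⟩) ≤ ε / 4 :=
    eventually_all.2 fun a => (tendsto_dL_of_weakConv (fun n => (hf (φ n)).1 a) (hL _)
      (hfL _)).eventually (eventually_le_nhds (by positivity))
  obtain ⟨N, hN⟩ := eventually_atTop.1 hnear
  refine ⟨N, fun i hi j hj x => ?_⟩
  obtain ⟨a, ha, hax⟩ := hA m x
  have hxa : ∀ n, dL (f n x) (f n a) ≤ ε / 4 := fun n =>
    hequi (f n) (hf n) x a _ hm (by rwa [M.D_symm])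
  have hLa := hL ⟨a, hAT a ha⟩
  linarith [dL_triangle ((hf (φ i)).1 x) ((hf (φ j)).1 x) ((hf (φ i)).1 a),
    dL_triangle ((hf (φ i)).1 a) ((hf (φ j)).1 x) hLa,
    dL_triangle hLa ((hf (φ j)).1 x) ((hf (φ j)).1 a), hxa (φ i), hxa (φ j),
    hN i hi ⟨a, ha⟩, hN j hj ⟨a, ha⟩, dL_comm (L ⟨a, hAT a ha⟩) (f (φ j) a),
    dL_comm (f (φ j) a) (f (φ j) x)]

theorem stmt17_general {K : Type} (M : PMSpace K) (hc : StarContinuous M.star)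
    (hcomp : PCompact M)
    (f : ℕ → K → EReal → ℝ) (hf : ∀ n, PLip M (f n)) :
    ∃ (φ : ℕ → ℕ) (g : K → EReal → ℝ), StrictMono φ ∧ PLip M g ∧
      Tendsto (fun n => dInf (f (φ n)) g) atTop (𝓝 0) := by
  obtain ⟨φ, hφ, hcauchy⟩ := exists_subseq_uniformCauchy_dL hc hcomp.2 hf
  obtain ⟨g, hg, hfg⟩ :=
    exists_uniform_limit_of_uniformCauchy (fun n x => (hf (φ n)).1 x) hcauchy
  have hweak : ∀ x, WeakConv (fun n => f (φ n) x) (g x) := fun x =>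
    weakConv_of_tendsto_dL (fun n => (hf (φ n)).1 x) (hg x) (tendsto_dL_of_uniform hfg x)
  exact ⟨φ, g, hφ, PLip.of_weakConv hc (fun n => hf (φ n)) hg hweak,
    tendsto_dInf_of_uniform hfg⟩

/-- Arzela-Ascoli, direct implication: if `(K,D,⋆)` is compact then `Lip¹_⋆(K,Δ⁺)` is
compact for `d_∞`: every sequence of probabilistic 1-Lipschitz maps has a subsequence
converging uniformly to a probabilistic 1-Lipschitz map. -/
theorem stmt17 {K : Type} (M : PMSpace K) (hc : StarContinuous M.star)
    (hsup : StarSupContinuous M.star) (hcomp : PCompact M)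
    (f : ℕ → K → EReal → ℝ) (hf : ∀ n, PLip M (f n)) :
    ∃ (φ : ℕ → ℕ) (g : K → EReal → ℝ), StrictMono φ ∧ PLip M g ∧
      Tendsto (fun n => dInf (f (φ n)) g) atTop (𝓝 0) :=
  stmt17_general M hc hcomp f hf
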